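/- Let (A,*) be a finite-dimensional associative algebra over a field of characteristic zero, (l,r,V) a bimodule with V finite-dimensional, and T : V → A an O-operator of (A,*) associated to (l,r,V). Then: (i) T(V) ⊆ A is a subalgebra of (A,*) and carries a well-defined dendriform algebra structure determined by T(u)≻T(v) = T(l(T(u))v) and T(u)≺T(v) = T(r(T(v))u); (ii) (r*,0,0,l*,V*) is a bimodule of this dendriform algebra T(V); (iii) identifying T with the element Σ_i T(v_i)⊗v_i* ∈ T(V)⊗V* for a basis {v_i} of V with dual basis {v_i*}, the element r̃ = T + σ(T) is a symmetric solution of the D-equation in the semidirect product dendriform algebra T(V)⋉_{r*,0,0,l*}V*. -/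

import Mathlib

set_option synthInstance.maxHeartbeats 1000000
set_option maxHeartbeats 1000000

open TensorProduct LinearMap Module

/-- Dendriform algebra axioms for a pair of bilinear products `succ` (≻) and `prec` (≺). -/
def IsDendriform {K A : Type*} [Field K] [AddCommGroup A] [Module K A]
    (succ prec : A →ₗ[K] A →ₗ[K] A) : Prop :=
  (∀ x y z : A, prec (prec x y) z = prec x (succ y z + prec y z)) ∧
  (∀ x y z : A, prec (succ x y) z = succ x (prec y z)) ∧
  (∀ x y z : A, succ x (succ y z) = succ (succ x y + prec x y) z)

/-- Bimodule of a dendriform algebra `(A, succ, prec)` on `V`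
(maps `l_≻ = ls`, `r_≻ = rs`, `l_≺ = lp`, `r_≺ = rp`). -/
def IsDendBimodule {K A V : Type*} [Field K] [AddCommGroup A] [Module K A]
    [AddCommGroup V] [Module K V] (succ prec : A →ₗ[K] A →ₗ[K] A)
    (ls rs lp rp : A →ₗ[K] V →ₗ[K] V) : Prop :=
  (∀ x y : A, lp (prec x y) = lp x ∘ₗ (lp y + ls y)) ∧
  (∀ x y : A, rp x ∘ₗ lp y = lp y ∘ₗ (rp x + rs x)) ∧
  (∀ x y : A, rp x ∘ₗ rp y = rp (succ y x + prec y x)) ∧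
  (∀ x y : A, lp (succ x y) = ls x ∘ₗ lp y) ∧
  (∀ x y : A, rp x ∘ₗ ls y = ls y ∘ₗ rp x) ∧
  (∀ x y : A, rp x ∘ₗ rs y = rs (prec y x)) ∧
  (∀ x y : A, ls (succ x y + prec x y) = ls x ∘ₗ ls y) ∧
  (∀ x y : A, rs x ∘ₗ (lp y + ls y) = ls y ∘ₗ rs x) ∧
  (∀ x y : A, rs x ∘ₗ (rs y + rp y) = rs (succ y x))

/-- `r₁₂ ∘ r₁₃` for `r ∈ B ⊗ B`: `Σ (aᵢ ∘ aⱼ) ⊗ bᵢ ⊗ bⱼ`. -/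
noncomputable def tprod12_13 {K B : Type*} [Field K] [AddCommGroup B] [Module K B]
    (m : B →ₗ[K] B →ₗ[K] B) (r : B ⊗[K] B) : B ⊗[K] (B ⊗[K] B) :=
  (TensorProduct.map (TensorProduct.lift m) LinearMap.id)
    ((TensorProduct.tensorTensorTensorComm K B B B B) (r ⊗ₜ[K] r))

/-- `r₁₃ ∘ r₂₃` for `r ∈ B ⊗ B`: `Σ aᵢ ⊗ aⱼ ⊗ (bᵢ ∘ bⱼ)`. -/
noncomputable def tprod13_23 {K B : Type*} [Field K] [AddCommGroup B] [Module K B]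
    (m : B →ₗ[K] B →ₗ[K] B) (r : B ⊗[K] B) : B ⊗[K] (B ⊗[K] B) :=
  (TensorProduct.assoc K B B B)
    ((TensorProduct.map LinearMap.id (TensorProduct.lift m))
      ((TensorProduct.tensorTensorTensorComm K B B B B) (r ⊗ₜ[K] r)))

/-- `r₂₃ ∘ r₁₂` for `r ∈ B ⊗ B`: `Σ aᵢ ⊗ (aⱼ ∘ bᵢ) ⊗ bⱼ`. -/
noncomputable def tprod23_12 {K B : Type*} [Field K] [AddCommGroup B] [Module K B]
    (m : B →ₗ[K] B →ₗ[K] B) (r : B ⊗[K] B) : B ⊗[K] (B ⊗[K] B) :=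
  (TensorProduct.map LinearMap.id (TensorProduct.comm K B B).toLinearMap)
    ((TensorProduct.assoc K B B B)
      ((TensorProduct.map LinearMap.id (TensorProduct.lift m))
        ((TensorProduct.tensorTensorTensorComm K B B B B)
          ((TensorProduct.map (TensorProduct.comm K B B).toLinearMap LinearMap.id)
            ((TensorProduct.tensorTensorTensorComm K B B B B) (r ⊗ₜ[K] r))))))

/-- Dualization `ρ ↦ ρ*` of an action `ρ : A →ₗ End V`, via transpose:
`⟨ρ*(x) v*, u⟩ = ⟨v*, ρ(x) u⟩`. -/
noncomputable def dualize {K A V : Type*} [Field K] [AddCommGroup A] [Module K A]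
    [AddCommGroup V] [Module K V] (ρ : A →ₗ[K] V →ₗ[K] V) :
    A →ₗ[K] Module.Dual K V →ₗ[K] Module.Dual K V :=
  (Module.Dual.transpose (R := K)) ∘ₗ ρ

/-- The semidirect-product bilinear product on `A × W` given by a product `m` on `A`
and a left action `φ` and a right action `ψ` of `A` on `W`:
`(x, a) ∘ (y, b) = (m x y, φ(x) b + ψ(y) a)`. -/
noncomputable def sd {K A W : Type*} [Field K] [AddCommGroup A] [Module K A]
    [AddCommGroup W] [Module K W]
    (m : A →ₗ[K] A →ₗ[K] A) (φ ψ : A →ₗ[K] W →ₗ[K] W) :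
    (A × W) →ₗ[K] (A × W) →ₗ[K] (A × W) :=
  ((m.compl₁₂ (LinearMap.fst K A W) (LinearMap.fst K A W)).compr₂ (LinearMap.inl K A W))
  + ((((φ.comp (LinearMap.fst K A W)).compl₂ (LinearMap.snd K A W))
      + (((ψ.comp (LinearMap.fst K A W)).compl₂ (LinearMap.snd K A W)).flip)).compr₂
      (LinearMap.inr K A W))

/-- The linear map `T : V → A` regarded as the element `Σ T(vᵢ) ⊗ vᵢ*` of
`A ⊗ V* ⊆ (A ⊕ V*) ⊗ (A ⊕ V*)`. -/
noncomputable def asTensor {K A V : Type*} [Field K] [AddCommGroup A] [Module K A]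
    [AddCommGroup V] [Module K V] [FiniteDimensional K V] (T : V →ₗ[K] A) :
    (A × Module.Dual K V) ⊗[K] (A × Module.Dual K V) :=
  (TensorProduct.map (LinearMap.inl K A (Module.Dual K V))
      (LinearMap.inr K A (Module.Dual K V)))
    ((TensorProduct.comm K (Module.Dual K V) A)
      ((dualTensorHomEquiv K V A).symm T))

/-!
The kernel of an `O`-operator `T` is stable under every `l (T u)` and `r (T v)` (put one argument
of the `O`-operator identity in `ker T`), so `T u ≻ T v = T (l (T u) v)` and
`T u ≺ T v = T (r (T v) u)` descend to bilinear products on `T(V)`. Their sum is `*`, and the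
dendriform axioms are the bimodule axioms of `(l, r)` transported by `T`. Dualising turns the
bimodule `(l, r)` of the associated associative algebra into the dendriform bimodule
`(r*, 0, 0, l*)`.

For the `D`-equation, expand `r̃ = ∑ᵢ (T vᵢ ⊗ vᵢ* + vᵢ* ⊗ T vᵢ)` in a basis. Each side of the
equation splits into four double sums, which match in pairs once an operator `f` is moved across
the canonical element: `∑ᵢ (vᵢ* ∘ f) ⊗ vᵢ = ∑ᵢ vᵢ* ⊗ f vᵢ`.
-/

def IsBimodule {K A V : Type*} [Field K] [AddCommGroup A] [Module K A] [AddCommGroup V]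
    [Module K V] (mul : A →ₗ[K] A →ₗ[K] A) (l r : A →ₗ[K] V →ₗ[K] V) : Prop :=
  (∀ x y : A, l (mul x y) = l x ∘ₗ l y) ∧ (∀ x y : A, r (mul x y) = r y ∘ₗ r x) ∧
    ∀ x y : A, l x ∘ₗ r y = r y ∘ₗ l x

def IsOOperator {K A V : Type*} [Field K] [AddCommGroup A] [Module K A] [AddCommGroup V]
    [Module K V] (mul : A →ₗ[K] A →ₗ[K] A) (l r : A →ₗ[K] V →ₗ[K] V) (T : V →ₗ[K] A) : Prop :=
  ∀ u v : V, mul (T u) (T v) = T (l (T u) v + r (T v) u)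

def SolvesDEquation {K B : Type*} [Field K] [AddCommGroup B] [Module K B]
    (succ prec : B →ₗ[K] B →ₗ[K] B) (r : B ⊗[K] B) : Prop :=
  tprod12_13 (succ + prec) r = tprod13_23 prec r + tprod23_12 succ r

section TensorSums

variable {K B ι : Type*} [Field K] [AddCommGroup B] [Module K B] [Fintype ι]
  (m : B →ₗ[K] B →ₗ[K] B) (a b : ι → B)

theorem tprod12_13_sum :
    tprod12_13 m (∑ i, a i ⊗ₜ[K] b i) = ∑ i, ∑ j, m (a i) (a j) ⊗ₜ[K] (b i ⊗ₜ[K] b j) := by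
  simp only [tprod12_13, sum_tmul, tmul_sum, map_sum, tensorTensorTensorComm_tmul, map_tmul,
    lift.tmul, id_coe, id_eq]
  exact Finset.sum_comm

theorem tprod13_23_sum :
    tprod13_23 m (∑ i, a i ⊗ₜ[K] b i) = ∑ i, ∑ j, a i ⊗ₜ[K] (a j ⊗ₜ[K] m (b i) (b j)) := by
  simp only [tprod13_23, sum_tmul, tmul_sum, map_sum, tensorTensorTensorComm_tmul, map_tmul,
    lift.tmul, id_coe, id_eq, assoc_tmul]
  exact Finset.sum_comm

theorem tprod23_12_sum :
    tprod23_12 m (∑ i, a i ⊗ₜ[K] b i) = ∑ i, ∑ j, a i ⊗ₜ[K] (m (a j) (b i) ⊗ₜ[K] b j) := by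
  simp only [tprod23_12, sum_tmul, tmul_sum, map_sum, tensorTensorTensorComm_tmul, map_tmul,
    lift.tmul, id_coe, id_eq, assoc_tmul, LinearEquiv.coe_coe, comm_tmul]

end TensorSums

section

variable {K A V : Type*} [Field K] [AddCommGroup A] [Module K A] [AddCommGroup V] [Module K V]

@[simp]
theorem sd_apply {W : Type*} [AddCommGroup W] [Module K W] (m : A →ₗ[K] A →ₗ[K] A)
    (φ ψ : A →ₗ[K] W →ₗ[K] W) (x y : A) (a b : W) :
    sd m φ ψ (x, a) (y, b) = (m x y, φ x b + ψ y a) := by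
  simp [sd]

@[simp]
theorem dualize_apply (ρ : A →ₗ[K] V →ₗ[K] V) (x : A) (g : Dual K V) :
    dualize ρ x g = g ∘ₗ ρ x := by
  simp [dualize, Dual.transpose_apply]

theorem asTensor_eq_sum [FiniteDimensional K V] {ι : Type*} [Fintype ι] (e : Basis ι K V)
    (T : V →ₗ[K] A) :
    asTensor T = ∑ i, ((T (e i), 0) : A × Dual K V) ⊗ₜ[K] ((0 : A), e.coord i) := by
  have hT : (dualTensorHomEquiv K V A).symm T = ∑ i, e.coord i ⊗ₜ[K] T (e i) := by
    rw [LinearEquiv.symm_apply_eq]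
    ext v
    simp only [dualTensorHomEquiv, LinearEquiv.ofBijective_apply, map_sum, LinearMap.sum_apply,
      dualTensorHom_apply, Basis.coord_apply]
    simp only [← map_smul, ← map_sum, Basis.sum_repr]
  rw [asTensor, hT]
  simp [comm_tmul]

theorem Module.Basis.sum_bilin_coord_comp {M ι : Type*} [AddCommMonoid M] [Module K M]
    [Fintype ι] (e : Basis ι K V) (Φ : Dual K V →ₗ[K] V →ₗ[K] M) (f : V →ₗ[K] V) :
    ∑ i, Φ (e.coord i ∘ₗ f) (e i) = ∑ i, Φ (e.coord i) (f (e i)) := by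
  calc ∑ i, Φ (e.coord i ∘ₗ f) (e i)
      = ∑ i, ∑ j, e.coord i (f (e j)) • Φ (e.coord j) (e i) := by
        refine Finset.sum_congr rfl fun i _ => ?_
        conv_lhs => rw [← e.sum_dual_apply_smul_coord (e.coord i ∘ₗ f)]
        simp
    _ = ∑ j, Φ (e.coord j) (f (e j)) := by
        rw [Finset.sum_comm]
        refine Finset.sum_congr rfl fun j _ => ?_
        conv_rhs => rw [← e.sum_repr (f (e j))]
        simp only [map_sum, map_smul, Basis.coord_apply]

end

namespace IsOOperator

variable {K A V : Type*} [Field K] [AddCommGroup A] [Module K A] [AddCommGroup V] [Module K V]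
  {mul : A →ₗ[K] A →ₗ[K] A} {l r : A →ₗ[K] V →ₗ[K] V} {T : V →ₗ[K] A}

theorem map_left_eq_of_map_eq (hT : IsOOperator mul l r T)
    (u : V) {v v' : V} (h : T v = T v') : T (l (T u) v) = T (l (T u) v') := by
  simpa [h, sub_eq_zero] using (hT u (v - v')).symm

theorem map_right_eq_of_map_eq (hT : IsOOperator mul l r T)
    (v : V) {u u' : V} (h : T u = T u') : T (r (T v) u) = T (r (T v) u') := by
  simpa [h, sub_eq_zero] using (hT (u - u') v).symm

theorem exists_rangeRestrict_products (hT : IsOOperator mul l r T) :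
    ∃ succ prec : range T →ₗ[K] range T →ₗ[K] range T,
      (∀ u v : V, succ (T.rangeRestrict u) (T.rangeRestrict v) = T.rangeRestrict (l (T u) v)) ∧
      (∀ u v : V, prec (T.rangeRestrict u) (T.rangeRestrict v) = T.rangeRestrict (r (T v) u)) := by
  obtain ⟨s, hs⟩ := T.rangeRestrict.exists_rightInverse_of_surjective T.range_rangeRestrict
  have hTs (v : V) : T (s (T.rangeRestrict v)) = T v :=
    congrArg Subtype.val (LinearMap.congr_fun hs (T.rangeRestrict v))
  refine ⟨((l ∘ₗ (range T).subtype).compl₂ s).compr₂ T.rangeRestrict,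
    (((r ∘ₗ (range T).subtype).compl₂ s).compr₂ T.rangeRestrict).flip,
    fun u v => Subtype.ext ?_, fun u v => Subtype.ext ?_⟩
  · exact map_left_eq_of_map_eq hT u (hTs v)
  · exact map_right_eq_of_map_eq hT v (hTs u)

variable {succ prec : range T →ₗ[K] range T →ₗ[K] range T}

theorem coe_succ_add_prec (hT : IsOOperator mul l r T)
    (hsucc : ∀ u v, succ (T.rangeRestrict u) (T.rangeRestrict v) = T.rangeRestrict (l (T u) v))
    (hprec : ∀ u v, prec (T.rangeRestrict u) (T.rangeRestrict v) = T.rangeRestrict (r (T v) u))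
    (x y : range T) :
    ((succ x y + prec x y : range T) : A) = mul x y := by
  obtain ⟨u, rfl⟩ := T.surjective_rangeRestrict x
  obtain ⟨v, rfl⟩ := T.surjective_rangeRestrict y
  simp [hsucc, hprec, hT u v]

theorem isDendriform_rangeRestrict (hT : IsOOperator mul l r T) (hA : IsBimodule mul l r)
    (hsucc : ∀ u v, succ (T.rangeRestrict u) (T.rangeRestrict v) = T.rangeRestrict (l (T u) v))
    (hprec : ∀ u v, prec (T.rangeRestrict u) (T.rangeRestrict v) = T.rangeRestrict (r (T v) u)) :
    IsDendriform succ prec := by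
  obtain ⟨hl, hr, hlr⟩ := hA
  have hsurj := T.surjective_rangeRestrict
  refine ⟨fun x y z => ?_, fun x y z => ?_, fun x y z => ?_⟩ <;>
    obtain ⟨u, rfl⟩ := hsurj x <;> obtain ⟨v, rfl⟩ := hsurj y <;> obtain ⟨w, rfl⟩ := hsurj z
  · rw [hprec, hprec, hsucc, hprec, ← map_add, hprec, ← hT, hr]
    rfl
  · rw [hsucc, hprec, hprec, hsucc, ← LinearMap.comp_apply (r (T w)), ← hlr]
    rfl
  · rw [hsucc, hsucc, hsucc, hprec, ← map_add, hsucc, ← hT, hl]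
    rfl

end IsOOperator

theorem IsBimodule.isDendBimodule_dualize_comp {K W A V : Type*} [Field K] [AddCommGroup W]
    [Module K W] [AddCommGroup A] [Module K A] [AddCommGroup V] [Module K V]
    {succ prec : W →ₗ[K] W →ₗ[K] W} {mul : A →ₗ[K] A →ₗ[K] A} {l r : A →ₗ[K] V →ₗ[K] V}
    (hA : IsBimodule mul l r) (ι : W →ₗ[K] A)
    (hι : ∀ x y, ι (succ x y + prec x y) = mul (ι x) (ι y)) :
    IsDendBimodule succ prec (dualize (r ∘ₗ ι)) 0 0 (dualize (l ∘ₗ ι)) := by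
  obtain ⟨hl, hr, hlr⟩ := hA
  refine ⟨by simp, by simp, fun x y => ?_, by simp, fun x y => ?_, by simp, fun x y => ?_,
    by simp, by simp⟩ <;> ext g v
  · simp only [comp_apply, dualize_apply, hι, hl]
  · simp only [comp_apply, dualize_apply]
    exact congrArg g (LinearMap.congr_fun (hlr _ _) v).symm
  · simp only [comp_apply, dualize_apply, hι, hr]

theorem solvesDEquation_asTensor_add_comm {K W V : Type*} [Field K] [AddCommGroup W]
    [Module K W] [AddCommGroup V] [Module K V] [FiniteDimensional K V]
    {succ prec : W →ₗ[K] W →ₗ[K] W} {ρl ρr : W →ₗ[K] V →ₗ[K] V} (S : V →ₗ[K] W)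
    (hsucc : ∀ u v, succ (S u) (S v) = S (ρl (S u) v))
    (hprec : ∀ u v, prec (S u) (S v) = S (ρr (S v) u)) :
    SolvesDEquation (sd succ (dualize ρr) 0) (sd prec 0 (dualize ρl))
      (asTensor S + TensorProduct.comm K _ _ (asTensor S)) := by
  let e := Module.finBasis K V
  let a (i : Fin (finrank K V)) : W × Dual K V := (S (e i), 0)
  let b (i : Fin (finrank K V)) : W × Dual K V := (0, e.coord i)
  have hexpand : asTensor S + TensorProduct.comm K _ _ (asTensor S)
      = ∑ s, Sum.elim a b s ⊗ₜ[K] Sum.elim b a s := by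
    simp [asTensor_eq_sum e, Fintype.sum_sum_type, comm_tmul, a, b]
  have shift (β : W × Dual K V →ₗ[K] W × Dual K V →ₗ[K]
      (W × Dual K V) ⊗[K] ((W × Dual K V) ⊗[K] (W × Dual K V))) (f : V →ₗ[K] V) :
      ∑ i, β (0, e.coord i ∘ₗ f) (S (e i), 0) = ∑ i, β (0, e.coord i) (S (f (e i)), 0) := by
    simpa using e.sum_bilin_coord_comp (β.compl₁₂ (inr K W _) (inl K W _ ∘ₗ S)) f
  rw [SolvesDEquation, hexpand, tprod12_13_sum, tprod13_23_sum, tprod23_12_sum]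
  simp only [Fintype.sum_sum_type, Sum.elim_inl, Sum.elim_inr, LinearMap.add_apply, sd_apply,
    dualize_apply, hsucc, hprec, a, b, map_zero, LinearMap.zero_apply, add_zero, zero_add,
    Prod.mk_zero_zero, tmul_zero, zero_tmul, Finset.sum_const_zero, add_tmul,
    Finset.sum_add_distrib]
  congr 1 <;> congr 1
  · conv_rhs => rw [Finset.sum_comm]
    exact Finset.sum_congr rfl fun y _ => (shift
      ((TensorProduct.mk K _ _).compl₂ (TensorProduct.mk K _ _ (0, e.coord y))).flip
      (ρl (S (e y)))).symm
  · conv_rhs => rw [Finset.sum_comm]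
    exact Finset.sum_congr rfl fun x _ => shift
      ((TensorProduct.mk K _ _).compl₂ (TensorProduct.mk K _ _ (0, e.coord x)))
      (ρr (S (e x)))
  · conv_lhs => rw [Finset.sum_comm]
    conv_rhs => rw [Finset.sum_comm]
    exact Finset.sum_congr rfl fun y _ => (shift
      ((TensorProduct.mk K _ _).compl₂ ((TensorProduct.mk K _ _).flip (0, e.coord y))).flip
      (ρr (S (e y)))).symm
  · conv_lhs => rw [Finset.sum_comm]
    conv_rhs => rw [Finset.sum_comm]
    exact Finset.sum_congr rfl fun y _ => shift
      ((TensorProduct.mk K _ _).compl₂ ((TensorProduct.mk K _ _).flip (0, e.coord y)))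
      (ρl (S (e y)))

theorem Ooperator_range_dendriform_and_D_equation_general
    {K A V : Type*} [Field K] [AddCommGroup A] [Module K A]
    [AddCommGroup V] [Module K V] [FiniteDimensional K V]
    (mul : A →ₗ[K] A →ₗ[K] A)
    (l r : A →ₗ[K] V →ₗ[K] V)
    (hl : ∀ x y : A, l (mul x y) = l x ∘ₗ l y)
    (hr : ∀ x y : A, r (mul x y) = r y ∘ₗ r x)
    (hlr : ∀ x y : A, l x ∘ₗ r y = r y ∘ₗ l x)
    (T : V →ₗ[K] A)
    (hT : ∀ u v : V, mul (T u) (T v) = T (l (T u) v + r (T v) u)) :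
    (∀ u v : V, mul (T u) (T v) ∈ LinearMap.range T) ∧
    ∃ sW pW : LinearMap.range T →ₗ[K] LinearMap.range T →ₗ[K] LinearMap.range T,
      (∀ u v : V,
        sW ⟨T u, LinearMap.mem_range_self T u⟩ ⟨T v, LinearMap.mem_range_self T v⟩
          = ⟨T (l (T u) v), LinearMap.mem_range_self T (l (T u) v)⟩) ∧
      (∀ u v : V,
        pW ⟨T u, LinearMap.mem_range_self T u⟩ ⟨T v, LinearMap.mem_range_self T v⟩
          = ⟨T (r (T v) u), LinearMap.mem_range_self T (r (T v) u)⟩) ∧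
      IsDendriform sW pW ∧
      (∀ x y : LinearMap.range T, ((sW x y + pW x y : LinearMap.range T) : A)
          = mul (x : A) (y : A)) ∧
      IsDendBimodule sW pW
        (dualize (r ∘ₗ (LinearMap.range T).subtype)) 0 0
        (dualize (l ∘ₗ (LinearMap.range T).subtype)) ∧
      ((TensorProduct.comm K (LinearMap.range T × Module.Dual K V)
            (LinearMap.range T × Module.Dual K V))
          (asTensor T.rangeRestrict
            + (TensorProduct.comm K (LinearMap.range T × Module.Dual K V)
                (LinearMap.range T × Module.Dual K V)) (asTensor T.rangeRestrict))
        = asTensor T.rangeRestrict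
            + (TensorProduct.comm K (LinearMap.range T × Module.Dual K V)
                (LinearMap.range T × Module.Dual K V)) (asTensor T.rangeRestrict)) ∧
      (tprod12_13
          (sd sW (dualize (r ∘ₗ (LinearMap.range T).subtype)) 0
            + sd pW 0 (dualize (l ∘ₗ (LinearMap.range T).subtype)))
          (asTensor T.rangeRestrict
            + (TensorProduct.comm K (LinearMap.range T × Module.Dual K V)
                (LinearMap.range T × Module.Dual K V)) (asTensor T.rangeRestrict))
        = tprod13_23 (sd pW 0 (dualize (l ∘ₗ (LinearMap.range T).subtype)))
            (asTensor T.rangeRestrict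
              + (TensorProduct.comm K (LinearMap.range T × Module.Dual K V)
                  (LinearMap.range T × Module.Dual K V)) (asTensor T.rangeRestrict))
          + tprod23_12 (sd sW (dualize (r ∘ₗ (LinearMap.range T).subtype)) 0)
              (asTensor T.rangeRestrict
                + (TensorProduct.comm K (LinearMap.range T × Module.Dual K V)
                    (LinearMap.range T × Module.Dual K V))
                  (asTensor T.rangeRestrict))) := by
  have hA : IsBimodule mul l r := ⟨hl, hr, hlr⟩
  obtain ⟨sW, pW, hsW, hpW⟩ := IsOOperator.exists_rangeRestrict_products hT
  have hmul := IsOOperator.coe_succ_add_prec hT hsW hpW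
  refine ⟨fun u v => hT u v ▸ mem_range_self T _, sW, pW, hsW, hpW,
    IsOOperator.isDendriform_rangeRestrict hT hA hsW hpW, hmul,
    hA.isDendBimodule_dualize_comp _ hmul, ?_, solvesDEquation_asTensor_add_comm _ hsW hpW⟩
  rw [map_add, comm_comm, add_comm]

/-- Theorem 2.1.8 together with Corollary 3.3.6: if `T : V → A` is an `O`-operator of a
finite-dimensional associative algebra `(A, *)` associated to a bimodule `(l, r, V)`,
then `T(V)` is a subalgebra of `(A, *)` carrying a well-defined dendriform structure
with `T(u) ≻ T(v) = T(l(T(u))v)`, `T(u) ≺ T(v) = T(r(T(v))u)`; `(r*, 0, 0, l*, V*)` is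
a bimodule of this dendriform algebra; and `r̃ = T + σ(T)` is a symmetric solution of
the `D`-equation in the semidirect-product dendriform algebra `T(V) ⋉ V*`. -/
theorem Ooperator_range_dendriform_and_D_equation
    {K A V : Type*} [Field K] [CharZero K] [AddCommGroup A] [Module K A]
    [FiniteDimensional K A] [AddCommGroup V] [Module K V] [FiniteDimensional K V]
    (mul : A →ₗ[K] A →ₗ[K] A)
    (hassoc : ∀ x y z : A, mul (mul x y) z = mul x (mul y z))
    (l r : A →ₗ[K] V →ₗ[K] V)
    (hl : ∀ x y : A, l (mul x y) = l x ∘ₗ l y)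
    (hr : ∀ x y : A, r (mul x y) = r y ∘ₗ r x)
    (hlr : ∀ x y : A, l x ∘ₗ r y = r y ∘ₗ l x)
    (T : V →ₗ[K] A)
    (hT : ∀ u v : V, mul (T u) (T v) = T (l (T u) v + r (T v) u)) :
    (∀ u v : V, mul (T u) (T v) ∈ LinearMap.range T) ∧
    ∃ sW pW : LinearMap.range T →ₗ[K] LinearMap.range T →ₗ[K] LinearMap.range T,
      (∀ u v : V,
        sW ⟨T u, LinearMap.mem_range_self T u⟩ ⟨T v, LinearMap.mem_range_self T v⟩
          = ⟨T (l (T u) v), LinearMap.mem_range_self T (l (T u) v)⟩) ∧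
      (∀ u v : V,
        pW ⟨T u, LinearMap.mem_range_self T u⟩ ⟨T v, LinearMap.mem_range_self T v⟩
          = ⟨T (r (T v) u), LinearMap.mem_range_self T (r (T v) u)⟩) ∧
      IsDendriform sW pW ∧
      (∀ x y : LinearMap.range T, ((sW x y + pW x y : LinearMap.range T) : A)
          = mul (x : A) (y : A)) ∧
      IsDendBimodule sW pW
        (dualize (r ∘ₗ (LinearMap.range T).subtype)) 0 0
        (dualize (l ∘ₗ (LinearMap.range T).subtype)) ∧
      ((TensorProduct.comm K (LinearMap.range T × Module.Dual K V)
            (LinearMap.range T × Module.Dual K V))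
          (asTensor T.rangeRestrict
            + (TensorProduct.comm K (LinearMap.range T × Module.Dual K V)
                (LinearMap.range T × Module.Dual K V)) (asTensor T.rangeRestrict))
        = asTensor T.rangeRestrict
            + (TensorProduct.comm K (LinearMap.range T × Module.Dual K V)
                (LinearMap.range T × Module.Dual K V)) (asTensor T.rangeRestrict)) ∧
      (tprod12_13
          (sd sW (dualize (r ∘ₗ (LinearMap.range T).subtype)) 0
            + sd pW 0 (dualize (l ∘ₗ (LinearMap.range T).subtype)))
          (asTensor T.rangeRestrict
            + (TensorProduct.comm K (LinearMap.range T × Module.Dual K V)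
                (LinearMap.range T × Module.Dual K V)) (asTensor T.rangeRestrict))
        = tprod13_23 (sd pW 0 (dualize (l ∘ₗ (LinearMap.range T).subtype)))
            (asTensor T.rangeRestrict
              + (TensorProduct.comm K (LinearMap.range T × Module.Dual K V)
                  (LinearMap.range T × Module.Dual K V)) (asTensor T.rangeRestrict))
          + tprod23_12 (sd sW (dualize (r ∘ₗ (LinearMap.range T).subtype)) 0)
              (asTensor T.rangeRestrict
                + (TensorProduct.comm K (LinearMap.range T × Module.Dual K V)
                    (LinearMap.range T × Module.Dual K V))
                  (asTensor T.rangeRestrict))) :=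
  Ooperator_range_dendriform_and_D_equation_general mul l r hl hr hlr T hT
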